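/- arXiv:1810.00512 — 5 statements merged into one kernel-verified Lean document; each statement's English description precedes it below -/
import Mathlib

section
/- Let N, K ≥ 1, A ∈ ℝ^{N×N}, B ∈ ℝ^{N×K}, let Q ∈ GL_N(ℝ) and M_u ∈ GL_K(ℝ) be invertible matrices, and let F ∈ ℝ^{K×N}. Then the pair (A, B) satisfies the Kalman rank condition if and only if the pair (Q^{-1}(AQ + BF), Q^{-1} B M_u) satisfies the Kalman rank condition. -/
open Matrix

/-- The Kalman matrix `(B, AB, …, A^{steps-1}B)` of a pair `(A, B)`, with the blocks
`A^i B` concatenated horizontally. -/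
noncomputable def kalmanMatrix {n k : Type*} [Fintype n] [Fintype k] [DecidableEq n]
    (steps : ℕ) (A : Matrix n n ℝ) (B : Matrix n k ℝ) :
    Matrix n (Fin steps × k) ℝ :=
  fun p iq => (A ^ (iq.1 : ℕ) * B) p iq.2

/-!
The column space of the Kalman matrix of `(A, B)` is the reachable subspace
`∑_{i < N} Aⁱ (range B)`. It does not change when `B` is replaced by `B M` with `M`
invertible, since `range (B M) = range B`, nor under feedback `A ↦ A + B G`, since
`(A + B G) x ≡ A x` modulo `range B`. Finally `Q⁻¹ (A Q + B F) = Q⁻¹ (A + B F Q⁻¹) Q`, and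
conjugating by `Q` multiplies the Kalman matrix on the left by the invertible `Q⁻¹`,
which preserves its rank.
-/

section Reachable

variable {R M : Type*} [Ring R] [AddCommGroup M] [Module R M]

def reachableSubspace (f : Module.End R M) (W : Submodule R M) (s : ℕ) : Submodule R M :=
  ⨆ i < s, W.map (f ^ i)

@[simp]
theorem reachableSubspace_zero (f : Module.End R M) (W : Submodule R M) :
    reachableSubspace f W 0 = ⊥ := by
  simp [reachableSubspace]

theorem reachableSubspace_succ (f : Module.End R M) (W : Submodule R M) (s : ℕ) :
    reachableSubspace f W (s + 1) = W ⊔ (reachableSubspace f W s).map f := by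
  simp only [reachableSubspace, Nat.iSup_lt_succ', Submodule.map_iSup, pow_zero,
    Module.End.one_eq_id, Submodule.map_id, pow_succ', Module.End.mul_eq_comp, Submodule.map_comp]

theorem reachableSubspace_add_le {f g : Module.End R M} {W : Submodule R M}
    (hg : LinearMap.range g ≤ W) (s : ℕ) :
    reachableSubspace (f + g) W s ≤ reachableSubspace f W s := by
  induction s with
  | zero => simp
  | succ s ih =>
    set V := reachableSubspace f W s
    rw [reachableSubspace_succ, reachableSubspace_succ]
    calc W ⊔ (reachableSubspace (f + g) W s).map (f + g)
        ≤ W ⊔ (V.map f ⊔ V.map g) :=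
          sup_le_sup_left ((Submodule.map_mono ih).trans (Submodule.map_add_le _ f g)) W
      _ ≤ W ⊔ V.map f :=
          sup_le le_sup_left
            (sup_le le_sup_right (LinearMap.map_le_range.trans (hg.trans le_sup_left)))

theorem reachableSubspace_add {f g : Module.End R M} {W : Submodule R M}
    (hg : LinearMap.range g ≤ W) (s : ℕ) :
    reachableSubspace (f + g) W s = reachableSubspace f W s := by
  refine le_antisymm (reachableSubspace_add_le hg s) ?_
  simpa using reachableSubspace_add_le (f := f + g) (g := -g) (by rwa [LinearMap.range_neg]) s

end Reachable

theorem Matrix.range_mulVecLin_mul_of_isUnit {R m k : Type*} [CommRing R] [Fintype k]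
    [DecidableEq k] (B : Matrix m k R) {M : Matrix k k R} (hM : IsUnit M) :
    LinearMap.range (B * M).mulVecLin = LinearMap.range B.mulVecLin := by
  rw [mulVecLin_mul, LinearMap.range_comp_of_range_eq_top]
  exact LinearMap.range_eq_top.2 (mulVec_surjective_iff_isUnit.2 hM)

section Kalman

variable {n k : Type*} [Fintype n] [Fintype k] [DecidableEq n]

theorem range_mulVecLin_kalmanMatrix (s : ℕ) (A : Matrix n n ℝ) (B : Matrix n k ℝ) :
    LinearMap.range (kalmanMatrix s A B).mulVecLin =
      reachableSubspace A.mulVecLin (LinearMap.range B.mulVecLin) s := by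
  have hcols : Set.range (kalmanMatrix s A B).col =
      ⋃ i : Fin s, Set.range (A ^ (i : ℕ) * B).col := by
    ext v
    simp only [Set.mem_iUnion, Set.mem_range, Prod.exists]
    rfl
  have hblock (i : ℕ) : LinearMap.range (A ^ i * B).mulVecLin =
      (LinearMap.range B.mulVecLin).map (A.mulVecLin ^ i) := by
    rw [mulVecLin_mul, LinearMap.range_comp, ← toLin'_apply', toLin'_pow, toLin'_apply']
  rw [range_mulVecLin, hcols, Submodule.span_iUnion, reachableSubspace, iSup_subtype']
  simp_rw [← range_mulVecLin, hblock]
  exact Fin.equivSubtype.iSup_congr fun _ => rfl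

theorem range_mulVecLin_kalmanMatrix_add_mul (s : ℕ) (A : Matrix n n ℝ) (B : Matrix n k ℝ)
    (G : Matrix k n ℝ) :
    LinearMap.range (kalmanMatrix s (A + B * G) B).mulVecLin =
      LinearMap.range (kalmanMatrix s A B).mulVecLin := by
  have hBG : LinearMap.range (B * G).mulVecLin ≤ LinearMap.range B.mulVecLin := by
    rw [mulVecLin_mul]
    exact LinearMap.range_comp_le_range _ _
  rw [range_mulVecLin_kalmanMatrix, range_mulVecLin_kalmanMatrix, mulVecLin_add,
    reachableSubspace_add hBG]

theorem range_mulVecLin_kalmanMatrix_mul_of_isUnit (s : ℕ) (A : Matrix n n ℝ)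
    (B : Matrix n k ℝ) [DecidableEq k] {M : Matrix k k ℝ} (hM : IsUnit M) :
    LinearMap.range (kalmanMatrix s A (B * M)).mulVecLin =
      LinearMap.range (kalmanMatrix s A B).mulVecLin := by
  rw [range_mulVecLin_kalmanMatrix, range_mulVecLin_kalmanMatrix,
    range_mulVecLin_mul_of_isUnit B hM]

theorem kalmanMatrix_conj (s : ℕ) (A : Matrix n n ℝ) (B : Matrix n k ℝ) {Q : Matrix n n ℝ}
    (hQ : IsUnit Q) : kalmanMatrix s (Q⁻¹ * A * Q) (Q⁻¹ * B) = Q⁻¹ * kalmanMatrix s A B := by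
  have hblock (i : ℕ) : (Q⁻¹ * A * Q) ^ i * (Q⁻¹ * B) = Q⁻¹ * (A ^ i * B) := by
    have hpow := Units.conj_pow' hQ.unit A i
    rw [coe_units_inv, hQ.unit_spec] at hpow
    rw [hpow, Matrix.mul_assoc, Matrix.mul_assoc, ← Matrix.mul_assoc Q,
      mul_nonsing_inv Q ((isUnit_iff_isUnit_det Q).1 hQ), Matrix.one_mul]
  ext p ⟨i, q⟩
  change ((Q⁻¹ * A * Q) ^ (i : ℕ) * (Q⁻¹ * B)) p q = _
  rw [hblock, mul_apply, mul_apply]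
  rfl

end Kalman

theorem kalman_invariance_general (N K : ℕ)
    (A : Matrix (Fin N) (Fin N) ℝ) (B : Matrix (Fin N) (Fin K) ℝ)
    (Q : Matrix (Fin N) (Fin N) ℝ) (Mu : Matrix (Fin K) (Fin K) ℝ)
    (F : Matrix (Fin K) (Fin N) ℝ) (hQ : IsUnit Q) (hMu : IsUnit Mu) :
    (kalmanMatrix N A B).rank = N ↔
      (kalmanMatrix N (Q⁻¹ * (A * Q + B * F)) (Q⁻¹ * B * Mu)).rank = N := by
  have hQdet := (isUnit_iff_isUnit_det Q).1 hQ
  have hfeedback : Q⁻¹ * (A * Q + B * F) = Q⁻¹ * (A + B * (F * Q⁻¹)) * Q := by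
    rw [Matrix.mul_assoc, Matrix.add_mul, Matrix.mul_assoc B, Matrix.mul_assoc F,
      nonsing_inv_mul Q hQdet, Matrix.mul_one]
  have hrank : (kalmanMatrix N (Q⁻¹ * (A * Q + B * F)) (Q⁻¹ * B * Mu)).rank =
      (kalmanMatrix N A B).rank := by
    rw [hfeedback, Matrix.mul_assoc Q⁻¹ B Mu, kalmanMatrix_conj _ _ _ hQ,
      rank_mul_eq_right_of_isUnit_det _ _ (isUnit_nonsing_inv_det Q hQdet), rank, rank,
      range_mulVecLin_kalmanMatrix_mul_of_isUnit _ _ _ hMu,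
      range_mulVecLin_kalmanMatrix_add_mul]
  rw [hrank]

/-- Invariance of the Kalman rank condition under change of state coordinates `Q`,
linear feedback `F` and invertible input transformation `M_u`: `(A, B)` satisfies the
Kalman rank condition if and only if `(Q⁻¹(AQ + BF), Q⁻¹ B M_u)` does. -/
theorem kalman_invariance (N K : ℕ) (hN : 1 ≤ N) (hK : 1 ≤ K)
    (A : Matrix (Fin N) (Fin N) ℝ) (B : Matrix (Fin N) (Fin K) ℝ)
    (Q : Matrix (Fin N) (Fin N) ℝ) (Mu : Matrix (Fin K) (Fin K) ℝ)
    (F : Matrix (Fin K) (Fin N) ℝ) (hQ : IsUnit Q) (hMu : IsUnit Mu) :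
    (kalmanMatrix N A B).rank = N ↔
      (kalmanMatrix N (Q⁻¹ * (A * Q + B * F)) (Q⁻¹ * B * Mu)).rank = N :=
  kalman_invariance_general N K A B Q Mu F hQ hMu
end

section
/- Let N, K, m be integers with 1 ≤ m ≤ N and m ≤ K. Let C ∈ ℝ^{N×N} be written in 2×2 block form C = [C_{11}, C_{12}; C_{21}, C_{22}] with C_{11} ∈ ℝ^{m×m}, C_{12} ∈ ℝ^{m×(N−m)}, C_{21} ∈ ℝ^{(N−m)×m}, C_{22} ∈ ℝ^{(N−m)×(N−m)}, and let B' ∈ ℝ^{N×K} be the matrix whose (p,q) entry is 1 if p = q ≤ m and 0 otherwise (i.e., B' = [Id_m, 0; 0, 0]). Then for every λ ∈ ℂ, the N×(N+K) complex matrix obtained by concatenating λI_N − C and B' horizontally has rank N if and only if the (N−m)×N complex matrix obtained by concatenating −C_{21} and λI_{N−m} − C_{22} horizontally has rank N−m. (Here real matrices are regarded as complex matrices entrywise.) -/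
/-!
A matrix has full row rank iff no nonzero row vector annihilates it. A row vector `v`
annihilating `(λI - C, B')` is killed on its first `m` coordinates by the identity block of
`B'`, so it is `(0, w)`, and then `(0, w) (λI - C) = w (-C₂₁, λI - C₂₂)`. Hence the left kernels
of the two matrices correspond.
-/

open Matrix

namespace Matrix

variable {K m n c k : Type*} [Field K] [Fintype m] [Fintype n]

theorem vecMul_sumElim_zero_left (M : Matrix (m ⊕ n) c K) (w : n → K) :
    Sum.elim 0 w ᵥ* M = w ᵥ* M.toRows₂ := by
  conv_lhs => rw [← fromRows_toRows M]
  rw [sumElim_vecMul_fromRows, zero_vecMul, zero_add]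

variable [Fintype c] [Fintype k]

theorem rank_eq_card_height_iff (M : Matrix m c K) :
    M.rank = Fintype.card m ↔ ∀ v : m → K, v ᵥ* M = 0 → v = 0 := by
  rw [rank_eq_finrank_span_row, ← Set.finrank, eq_comm,
    ← linearIndependent_iff_card_eq_finrank_span, ← vecMul_injective_iff,
    ← coe_vecMulLinear, injective_iff_map_eq_zero]
  rfl

theorem rank_eq_card_height_of_submatrix_eq_one [DecidableEq m] (B : Matrix m k K)
    (e : m → k) (he : B.submatrix id e = 1) : B.rank = Fintype.card m :=
  le_antisymm B.rank_le_card_height (by simpa [he] using B.rank_submatrix_le id e)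

theorem rank_fromCols_fromRows_zero_eq_card_iff (M : Matrix (m ⊕ n) c K) (B : Matrix m k K)
    (hB : B.rank = Fintype.card m) :
    (fromCols M (fromRows B 0)).rank = Fintype.card (m ⊕ n) ↔
      M.toRows₂.rank = Fintype.card n := by
  rw [rank_eq_card_height_iff] at hB
  simp only [rank_eq_card_height_iff, vecMul_fromCols, vecMul_fromRows, vecMul_zero, add_zero]
  constructor
  · intro h w hw
    have hv := h (Sum.elim (0 : m → K) w) (by simp [vecMul_sumElim_zero_left, hw])
    simpa using congrArg (· ∘ Sum.inr) hv
  · intro h v hv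
    have hM : v ᵥ* M = 0 := by simpa using congrArg (· ∘ Sum.inl) hv
    have hinl : v ∘ Sum.inl = 0 := hB _ (by simpa using congrArg (· ∘ Sum.inr) hv)
    have hsplit : v = Sum.elim (0 : m → K) (v ∘ Sum.inr) := by
      rw [← hinl, Sum.elim_comp_inl_inr]
    have hinr : v ∘ Sum.inr = 0 := h _ (by rw [← vecMul_sumElim_zero_left, ← hsplit, hM])
    rw [hsplit, hinr, Sum.elim_zero_zero]

end Matrix

theorem hautus_block_rank_reduction_general (N K m : ℕ) (hmN : m ≤ N) (hmK : m ≤ K)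
    (C11 : Matrix (Fin m) (Fin m) ℝ) (C12 : Matrix (Fin m) (Fin (N - m)) ℝ)
    (C21 : Matrix (Fin (N - m)) (Fin m) ℝ)
    (C22 : Matrix (Fin (N - m)) (Fin (N - m)) ℝ)
    (B' : Matrix (Fin m ⊕ Fin (N - m)) (Fin K) ℝ)
    (hB'top : ∀ (p : Fin m) (q : Fin K), B' (Sum.inl p) q = if (p : ℕ) = (q : ℕ) then 1 else 0)
    (hB'bot : ∀ (p : Fin (N - m)) (q : Fin K), B' (Sum.inr p) q = 0)
    (lam : ℂ) :
    (Matrix.fromCols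
        (lam • (1 : Matrix (Fin m ⊕ Fin (N - m)) (Fin m ⊕ Fin (N - m)) ℂ)
          - (Matrix.fromBlocks C11 C12 C21 C22).map Complex.ofReal)
        (B'.map Complex.ofReal)).rank = N
    ↔ (Matrix.fromCols ((-C21).map Complex.ofReal)
        (lam • (1 : Matrix (Fin (N - m)) (Fin (N - m)) ℂ)
          - C22.map Complex.ofReal)).rank = N - m := by
  set Btop : Matrix (Fin m) (Fin K) ℂ := (B'.map Complex.ofReal).toRows₁
  have hB : B'.map Complex.ofReal = fromRows Btop 0 := by
    ext (p | p) q <;> simp [Btop, hB'bot]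
  have hBtop : Btop.rank = Fintype.card (Fin m) := by
    refine rank_eq_card_height_of_submatrix_eq_one Btop (Fin.castLE hmK) ?_
    ext p q
    simp [Btop, hB'top, one_apply, Fin.ext_iff, apply_ite Complex.ofReal]
  have hlower : (lam • (1 : Matrix (Fin m ⊕ Fin (N - m)) (Fin m ⊕ Fin (N - m)) ℂ)
      - (fromBlocks C11 C12 C21 C22).map Complex.ofReal).toRows₂ =
      fromCols ((-C21).map Complex.ofReal) (lam • 1 - C22.map Complex.ofReal) := by
    ext p (q | q) <;> simp [one_apply]
  have hcard : Fintype.card (Fin m ⊕ Fin (N - m)) = N := by simp; omega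
  have key := rank_fromCols_fromRows_zero_eq_card_iff
    (lam • 1 - (fromBlocks C11 C12 C21 C22).map Complex.ofReal) Btop hBtop
  rwa [hcard, hlower, Fintype.card_fin, ← hB] at key

/-- Hautus-type block rank reduction: for `C = [C₁₁, C₁₂; C₂₁, C₂₂]` and
`B' = [Id_m, 0; 0, 0]`, the matrix `(λI_N − C, B')` has rank `N` if and only if the
matrix `(−C₂₁, λI_{N−m} − C₂₂)` has rank `N − m`. -/
theorem hautus_block_rank_reduction (N K m : ℕ) (hm1 : 1 ≤ m) (hmN : m ≤ N) (hmK : m ≤ K)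
    (C11 : Matrix (Fin m) (Fin m) ℝ) (C12 : Matrix (Fin m) (Fin (N - m)) ℝ)
    (C21 : Matrix (Fin (N - m)) (Fin m) ℝ)
    (C22 : Matrix (Fin (N - m)) (Fin (N - m)) ℝ)
    (B' : Matrix (Fin m ⊕ Fin (N - m)) (Fin K) ℝ)
    (hB'top : ∀ (p : Fin m) (q : Fin K), B' (Sum.inl p) q = if (p : ℕ) = (q : ℕ) then 1 else 0)
    (hB'bot : ∀ (p : Fin (N - m)) (q : Fin K), B' (Sum.inr p) q = 0)
    (lam : ℂ) :
    (Matrix.fromCols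
        (lam • (1 : Matrix (Fin m ⊕ Fin (N - m)) (Fin m ⊕ Fin (N - m)) ℂ)
          - (Matrix.fromBlocks C11 C12 C21 C22).map Complex.ofReal)
        (B'.map Complex.ofReal)).rank = N
    ↔ (Matrix.fromCols ((-C21).map Complex.ofReal)
        (lam • (1 : Matrix (Fin (N - m)) (Fin (N - m)) ℂ)
          - C22.map Complex.ofReal)).rank = N - m :=
  hautus_block_rank_reduction_general N K m hmN hmK C11 C12 C21 C22 B' hB'top hB'bot lam
end

section
/- Let N, K, m be integers with 1 ≤ m < N and m ≤ K. Let C ∈ ℝ^{N×N} be written in 2×2 block form C = [C_{11}, C_{12}; C_{21}, C_{22}] with C_{11} ∈ ℝ^{m×m} and C_{22} ∈ ℝ^{(N−m)×(N−m)}, and let B' ∈ ℝ^{N×K} be the matrix whose (p,q) entry is 1 if p = q ≤ m and 0 otherwise (i.e., B' = [Id_m, 0; 0, 0]). If the pair (C, B') satisfies the Kalman rank condition (with state dimension N), then the pair (C_{22}, C_{21}), with C_{22} ∈ ℝ^{(N−m)×(N−m)} and C_{21} ∈ ℝ^{(N−m)×m}, satisfies the Kalman rank condition (with state dimension N−m).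 -/
/-!
When the number of steps is the state dimension, the range of the Kalman matrix of `(A, B)` is
the smallest `A`-invariant subspace containing the range of `B`: it is invariant by
Cayley–Hamilton, and any invariant subspace containing `range B` contains every `A ^ i * B`.
Let `W` be this subspace for `(C₂₂, C₂₁)` and `π` the projection onto the last `N - m`
coordinates. Because the bottom rows of `B'` vanish, `π⁻¹ W` contains `range B'`, and it is
`C`-invariant since the bottom block of `C v` is `C₂₁ v₁ + C₂₂ v₂`. Hence
`N ≤ dim π⁻¹ W ≤ m + dim W`.
-/

open Matrix

theorem LinearMap.finrank_comap_le {K V V' : Type*} [DivisionRing K] [AddCommGroup V]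
    [Module K V] [AddCommGroup V'] [Module K V'] [FiniteDimensional K V]
    (f : V →ₗ[K] V') (p : Submodule K V') [FiniteDimensional K p] :
    Module.finrank K (p.comap f) ≤ Module.finrank K p + Module.finrank K (LinearMap.ker f) := by
  have h := f.lift_rank_comap_le p
  simp only [← Module.finrank_eq_rank, Cardinal.lift_natCast] at h
  exact_mod_cast h

theorem LinearMap.finrank_ker_funLeft_inr (K m o : Type*) [DivisionRing K] [Fintype m]
    [Fintype o] :
    Module.finrank K (LinearMap.ker (LinearMap.funLeft K K (Sum.inr : o → m ⊕ o))) =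
      Fintype.card m := by
  have hsurj :=
    LinearMap.funLeft_surjective_of_injective K K _ (Sum.inr_injective (α := m) (β := o))
  have h := LinearMap.finrank_range_add_finrank_ker (LinearMap.funLeft K K (Sum.inr : o → m ⊕ o))
  rw [LinearMap.range_eq_top.mpr hsurj, finrank_top] at h
  simp only [Module.finrank_fintype_fun_eq_card, Fintype.card_sum] at h
  omega

section Kalman

variable {n k : Type*} [Fintype n] [Fintype k] [DecidableEq n]

theorem kalmanMatrix_mulVec (steps : ℕ) (A : Matrix n n ℝ) (B : Matrix n k ℝ)
    (u : Fin steps × k → ℝ) :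
    kalmanMatrix steps A B *ᵥ u = ∑ i : Fin steps, (A ^ (i : ℕ) * B) *ᵥ fun q => u (i, q) := by
  ext p
  simp [kalmanMatrix, mulVec, dotProduct, Fintype.sum_prod_type, Finset.sum_apply]

theorem pow_mul_mulVec_mem_range_kalmanMatrix_of_lt {steps j : ℕ} (hj : j < steps)
    (A : Matrix n n ℝ) (B : Matrix n k ℝ) (x : k → ℝ) :
    (A ^ j * B) *ᵥ x ∈ LinearMap.range (kalmanMatrix steps A B).mulVecLin := by
  refine ⟨fun iq => if (iq.1 : ℕ) = j then x iq.2 else 0, ?_⟩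
  rw [mulVecLin_apply, kalmanMatrix_mulVec, Fintype.sum_eq_single ⟨j, hj⟩]
  · simp
  · intro i hi
    simp only [Fin.ext_iff.not.mp hi, if_false]
    exact mulVec_zero _

-- Cayley–Hamilton: `A ^ j` is a linear combination of the `A ^ i` with `i < card n`.
theorem pow_mul_mulVec_mem_range_kalmanMatrix (A : Matrix n n ℝ) (B : Matrix n k ℝ) (j : ℕ)
    (x : k → ℝ) :
    (A ^ j * B) *ᵥ x ∈ LinearMap.range (kalmanMatrix (Fintype.card n) A B).mulVecLin := by
  rcases isEmpty_or_nonempty n with _ | _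
  · rw [Subsingleton.elim ((A ^ j * B) *ᵥ x) 0]
    exact Submodule.zero_mem _
  induction j using Nat.strong_induction_on generalizing x with
  | _ j ih =>
  rcases lt_or_ge j (Fintype.card n) with hj | hj
  · exact pow_mul_mulVec_mem_range_kalmanMatrix_of_lt hj A B x
  have hdeg : (Polynomial.X ^ j %ₘ A.charpoly).natDegree < Fintype.card n := by
    rw [← A.charpoly_natDegree_eq_dim]
    refine Polynomial.natDegree_modByMonic_lt _ A.charpoly_monic fun h => ?_
    simpa [h] using A.charpoly_natDegree_eq_dim.trans_ne Fintype.card_ne_zero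
  rw [A.pow_eq_aeval_mod_charpoly, Polynomial.aeval_eq_sum_range' hdeg, Matrix.sum_mul,
    sum_mulVec]
  exact Submodule.sum_mem _ fun i hi => by
    rw [Matrix.smul_mul, smul_mulVec]
    exact Submodule.smul_mem _ _ (ih i ((Finset.mem_range.mp hi).trans_le hj) x)

theorem mulVec_mem_range_kalmanMatrix (A : Matrix n n ℝ) (B : Matrix n k ℝ) {w : n → ℝ}
    (hw : w ∈ LinearMap.range (kalmanMatrix (Fintype.card n) A B).mulVecLin) :
    A *ᵥ w ∈ LinearMap.range (kalmanMatrix (Fintype.card n) A B).mulVecLin := by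
  obtain ⟨u, rfl⟩ := hw
  rw [mulVecLin_apply, kalmanMatrix_mulVec, ← mulVecLin_apply, map_sum]
  refine Submodule.sum_mem _ fun i _ => ?_
  rw [mulVecLin_apply, mulVec_mulVec, ← Matrix.mul_assoc, ← pow_succ']
  exact pow_mul_mulVec_mem_range_kalmanMatrix A B _ _

theorem range_kalmanMatrix_le (steps : ℕ) (A : Matrix n n ℝ) (B : Matrix n k ℝ)
    {W : Submodule ℝ (n → ℝ)} (hA : ∀ w ∈ W, A *ᵥ w ∈ W) (hB : ∀ x, B *ᵥ x ∈ W) :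
    LinearMap.range (kalmanMatrix steps A B).mulVecLin ≤ W := by
  rintro _ ⟨u, rfl⟩
  rw [mulVecLin_apply, kalmanMatrix_mulVec]
  refine Submodule.sum_mem _ fun i _ => ?_
  induction (i : ℕ) with
  | zero => simpa using hB _
  | succ j ih => simpa [pow_succ', Matrix.mul_assoc, ← mulVec_mulVec] using hA _ ih

end Kalman

theorem rank_kalmanMatrix_fromBlocks_le {m o k : Type*} [Fintype m] [Fintype o] [Fintype k]
    [DecidableEq m] [DecidableEq o] (steps : ℕ) (C₁₁ : Matrix m m ℝ) (C₁₂ : Matrix m o ℝ)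
    (C₂₁ : Matrix o m ℝ) (C₂₂ : Matrix o o ℝ) (B : Matrix (m ⊕ o) k ℝ)
    (hB : ∀ p q, B (Sum.inr p) q = 0) :
    (kalmanMatrix steps (fromBlocks C₁₁ C₁₂ C₂₁ C₂₂) B).rank ≤
      Fintype.card m + (kalmanMatrix (Fintype.card o) C₂₂ C₂₁).rank := by
  set W := LinearMap.range (kalmanMatrix (Fintype.card o) C₂₂ C₂₁).mulVecLin
  set π := LinearMap.funLeft ℝ ℝ (Sum.inr : o → m ⊕ o)
  have hle : LinearMap.range (kalmanMatrix steps (fromBlocks C₁₁ C₁₂ C₂₁ C₂₂) B).mulVecLin ≤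
      W.comap π := by
    refine range_kalmanMatrix_le steps _ _ (fun w hw => ?_) (fun x => ?_)
    · have hC₂₁ : C₂₁ *ᵥ (w ∘ Sum.inl) ∈ W := by
        simpa only [pow_zero, Matrix.one_mul] using
          pow_mul_mulVec_mem_range_kalmanMatrix C₂₂ C₂₁ 0 (w ∘ Sum.inl)
      simp only [π, Submodule.mem_comap, fromBlocks_mulVec] at hw ⊢
      exact add_mem hC₂₁ (mulVec_mem_range_kalmanMatrix C₂₂ C₂₁ hw)
    · have hbot : π (B *ᵥ x) = 0 := by
        ext p
        simp [π, mulVec, dotProduct, hB]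
      simp [hbot]
  calc (kalmanMatrix steps (fromBlocks C₁₁ C₁₂ C₂₁ C₂₂) B).rank
      ≤ Module.finrank ℝ (W.comap π) := Submodule.finrank_mono hle
    _ ≤ Module.finrank ℝ W + Module.finrank ℝ (LinearMap.ker π) := π.finrank_comap_le W
    _ = Fintype.card m + (kalmanMatrix (Fintype.card o) C₂₂ C₂₁).rank := by
      rw [LinearMap.finrank_ker_funLeft_inr, add_comm]; rfl

theorem kalman_block_reduction_general (N K m : ℕ)
    (C11 : Matrix (Fin m) (Fin m) ℝ) (C12 : Matrix (Fin m) (Fin (N - m)) ℝ)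
    (C21 : Matrix (Fin (N - m)) (Fin m) ℝ)
    (C22 : Matrix (Fin (N - m)) (Fin (N - m)) ℝ)
    (B' : Matrix (Fin m ⊕ Fin (N - m)) (Fin K) ℝ)
    (hB'bot : ∀ (p : Fin (N - m)) (q : Fin K), B' (Sum.inr p) q = 0)
    (hkal : (kalmanMatrix N (Matrix.fromBlocks C11 C12 C21 C22) B').rank = N) :
    (kalmanMatrix (N - m) C22 C21).rank = N - m := by
  have hlower := rank_kalmanMatrix_fromBlocks_le N C11 C12 C21 C22 B' hB'bot
  have hupper := (kalmanMatrix (N - m) C22 C21).rank_le_card_height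
  rw [Fintype.card_fin, Fintype.card_fin] at hlower
  rw [Fintype.card_fin] at hupper
  omega

/-- If `C = [C₁₁, C₁₂; C₂₁, C₂₂]` and `B' = [Id_m, 0; 0, 0]` satisfy the Kalman rank
condition with state dimension `N`, then the pair `(C₂₂, C₂₁)` satisfies the Kalman rank
condition with state dimension `N - m`. -/
theorem kalman_block_reduction (N K m : ℕ) (hm1 : 1 ≤ m) (hmN : m < N) (hmK : m ≤ K)
    (C11 : Matrix (Fin m) (Fin m) ℝ) (C12 : Matrix (Fin m) (Fin (N - m)) ℝ)
    (C21 : Matrix (Fin (N - m)) (Fin m) ℝ)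
    (C22 : Matrix (Fin (N - m)) (Fin (N - m)) ℝ)
    (B' : Matrix (Fin m ⊕ Fin (N - m)) (Fin K) ℝ)
    (hB'top : ∀ (p : Fin m) (q : Fin K), B' (Sum.inl p) q = if (p : ℕ) = (q : ℕ) then 1 else 0)
    (hB'bot : ∀ (p : Fin (N - m)) (q : Fin K), B' (Sum.inr p) q = 0)
    (hkal : (kalmanMatrix N (Matrix.fromBlocks C11 C12 C21 C22) B').rank = N) :
    (kalmanMatrix (N - m) C22 C21).rank = N - m :=
  kalman_block_reduction_general N K m C11 C12 C21 C22 B' hB'bot hkal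
end

section
/- Let T > 0 and let α, β : [0,T] → ℝ be continuous functions. Then the following two statements are equivalent: (a) there is no pair (c,d) ∈ ℂ² with (c,d) ≠ (0,0) such that c·α(t) = d·α(t)·(∫_0^t β(τ)dτ) for all t ∈ [0,T]; (b) there exist real numbers t_1, t_2 with 0 < t_1 < t_2 < T such that α(t_1) ≠ 0, α(t_2) ≠ 0, and ∫_{t_1}^{t_2} β(τ)dτ ≠ 0. -/
/-!
Write `B t = ∫₀ᵗ β`. A pair `(c, d)` satisfies the identity iff `c = d * B t` wherever
`α t ≠ 0`, so a nonzero pair exists iff `B` is constant on `{t ∈ [0, T] | α t ≠ 0}`. Since `α` is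
continuous, this set lies in the closure of its part in `(0, T)`, and `B` is continuous, so
constancy may be tested at interior points, where `B t₂ - B t₁ = ∫_{t₁}^{t₂} β`.
-/

open Set MeasureTheory

theorem exists_ne_zero_mul_eq_iff_subsingleton_image {ι K : Type*} [Field K] (s : Set ι)
    (a b : ι → K) :
    (∃ c d : K, (c, d) ≠ (0, 0) ∧ ∀ t ∈ s, c * a t = d * a t * b t) ↔
      (b '' {t ∈ s | a t ≠ 0}).Subsingleton := by
  constructor
  · rintro ⟨c, d, hcd, h⟩
    have hc : ∀ t ∈ s, a t ≠ 0 → c = d * b t := fun t ht hat =>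
      mul_right_cancel₀ hat (by rw [h t ht]; ring)
    rintro _ ⟨t, ⟨ht, hat⟩, rfl⟩ _ ⟨t', ⟨ht', hat'⟩, rfl⟩
    have hd : d ≠ 0 := by rintro rfl; exact hcd (by simp [hc t ht hat])
    exact mul_left_cancel₀ hd ((hc t ht hat).symm.trans (hc t' ht' hat'))
  · intro h
    by_cases hex : ∃ t₀ ∈ s, a t₀ ≠ 0
    · obtain ⟨t₀, ht₀, hat₀⟩ := hex
      refine ⟨b t₀, 1, by simp, fun t ht => ?_⟩
      by_cases hat : a t = 0
      · simp [hat]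
      · rw [h (mem_image_of_mem b ⟨ht₀, hat₀⟩) (mem_image_of_mem b ⟨ht, hat⟩)]; ring
    · push Not at hex
      exact ⟨1, 0, by simp, fun t ht => by simp [hex t ht]⟩

theorem not_subsingleton_image_iff_exists_lt {ι Y : Type*} [LinearOrder ι] {f : ι → Y}
    {s : Set ι} : ¬ (f '' s).Subsingleton ↔ ∃ x ∈ s, ∃ y ∈ s, x < y ∧ f x ≠ f y := by
  constructor
  · intro h
    simp only [Set.Subsingleton, forall_mem_image, not_forall] at h
    obtain ⟨x, hx, y, hy, hne⟩ := h
    rcases (ne_of_apply_ne f hne).lt_or_gt with hxy | hyx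
    · exact ⟨x, hx, y, hy, hxy, hne⟩
    · exact ⟨y, hy, x, hx, hyx, Ne.symm hne⟩
  · rintro ⟨x, hx, y, hy, -, hne⟩ h
    exact hne (h (mem_image_of_mem f hx) (mem_image_of_mem f hy))

section Closure

variable {X Y : Type*} [TopologicalSpace X] [TopologicalSpace Y] {f : X → Y} {s u : Set X}

theorem ContinuousOn.inter_preimage_subset_closure {O : Set Y} (hf : ContinuousOn f s)
    (hO : IsOpen O) (hus : u ⊆ s) (hsu : s ⊆ closure u) :
    s ∩ f ⁻¹' O ⊆ closure (u ∩ f ⁻¹' O) := by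
  obtain ⟨V, hV, hVs⟩ := continuousOn_iff'.1 hf O hO
  have hVu : V ∩ u = u ∩ f ⁻¹' O := by
    ext x
    have hx := Set.ext_iff.1 hVs x
    have := @hus x
    simp only [mem_inter_iff, mem_preimage] at hx ⊢
    tauto
  calc s ∩ f ⁻¹' O = V ∩ s := by rw [inter_comm, hVs]
    _ ⊆ V ∩ closure u := inter_subset_inter_right V hsu
    _ ⊆ closure (V ∩ u) := hV.inter_closure
    _ = closure (u ∩ f ⁻¹' O) := by rw [hVu]

theorem ContinuousOn.subsingleton_image_of_subset_closure [T1Space Y] (hf : ContinuousOn f s)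
    (hus : u ⊆ s) (hsu : s ⊆ closure u) (hu : (f '' u).Subsingleton) :
    (f '' s).Subsingleton :=
  hu.closure.anti <| image_subset_iff.2 fun x hx =>
    ((hf x hx).mono hus).mem_closure_image (hsu hx)

end Closure

section Primitive

variable {E : Type*} [NormedAddCommGroup E] [NormedSpace ℝ E] {f : ℝ → E} {a b : ℝ}

theorem ContinuousOn.continuousOn_primitive_Icc (hf : ContinuousOn f (Icc a b)) (hab : a ≤ b) :
    ContinuousOn (fun x => ∫ t in a..x, f t) (Icc a b) := by
  rw [← uIcc_of_le hab] at hf ⊢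
  exact intervalIntegral.continuousOn_primitive_interval (hf.integrableOn_compact isCompact_uIcc)

theorem ContinuousOn.integral_sub_integral_of_mem_Icc (hf : ContinuousOn f (Icc a b)) {x y : ℝ}
    (hx : x ∈ Icc a b) (hy : y ∈ Icc a b) :
    (∫ t in a..y, f t) - (∫ t in a..x, f t) = ∫ t in x..y, f t :=
  have ha : a ∈ Icc a b := left_mem_Icc.2 (hx.1.trans hx.2)
  intervalIntegral.integral_interval_sub_left
    (hf.mono (uIcc_subset_Icc ha hy)).intervalIntegrable
    (hf.mono (uIcc_subset_Icc ha hx)).intervalIntegrable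

end Primitive

/-- Equivalence of items (2) and (3) in the lemma characterizing controllability of the
planar cascade ODE system: for continuous `α β` on `[0, T]`, the nonexistence of a nonzero
pair `(c, d) ∈ ℂ²` with `c·α(t) = d·α(t)·∫_0^t β` for all `t ∈ [0, T]` is equivalent to the
existence of `0 < t₁ < t₂ < T` with `α(t₁) ≠ 0`, `α(t₂) ≠ 0` and `∫_{t₁}^{t₂} β ≠ 0`. -/
theorem cascade_no_nonzero_pair_iff_times (T : ℝ) (hT : 0 < T) (α β : ℝ → ℝ)
    (hα : ContinuousOn α (Set.Icc 0 T)) (hβ : ContinuousOn β (Set.Icc 0 T)) :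
    (¬ ∃ c d : ℂ, ((c, d) : ℂ × ℂ) ≠ (0, 0) ∧
        ∀ t ∈ Set.Icc (0 : ℝ) T,
          c * (α t : ℂ) = d * (α t : ℂ) * ((∫ τ in (0:ℝ)..t, β τ : ℝ) : ℂ))
    ↔ (∃ t₁ t₂ : ℝ, 0 < t₁ ∧ t₁ < t₂ ∧ t₂ < T ∧
        α t₁ ≠ 0 ∧ α t₂ ≠ 0 ∧ (∫ τ in t₁..t₂, β τ) ≠ 0) := by
  set B : ℝ → ℝ := fun t => ∫ τ in (0:ℝ)..t, β τ
  have hB : ContinuousOn B (Icc 0 T) := hβ.continuousOn_primitive_Icc hT.le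
  have hB_ne {x y : ℝ} (hx : 0 < x) (hxy : x < y) (hy : y < T) :
      B x ≠ B y ↔ ∫ τ in x..y, β τ ≠ 0 := by
    rw [← hβ.integral_sub_integral_of_mem_Icc ⟨hx.le, (hxy.trans hy).le⟩
      ⟨(hx.trans hxy).le, hy.le⟩, sub_ne_zero, ne_comm]
  set S := Icc 0 T ∩ α ⁻¹' {0}ᶜ
  set S₀ := Ioo 0 T ∩ α ⁻¹' {0}ᶜ
  have hS₀S : S₀ ⊆ S := inter_subset_inter_left _ Ioo_subset_Icc_self
  have hSS₀ : S ⊆ closure S₀ :=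
    hα.inter_preimage_subset_closure isOpen_compl_singleton Ioo_subset_Icc_self
      (closure_Ioo hT.ne).symm.subset
  rw [exists_ne_zero_mul_eq_iff_subsingleton_image]
  calc _ ↔ ¬ (B '' S).Subsingleton := by
        rw [← Complex.ofReal_injective.subsingleton_image_iff, ← image_comp]
        simp only [ne_eq, Complex.ofReal_eq_zero]
        rfl
    _ ↔ ¬ (B '' S₀).Subsingleton :=
        not_congr ⟨fun h => h.anti (image_mono hS₀S),
          (hB.mono inter_subset_left).subsingleton_image_of_subset_closure hS₀S hSS₀⟩
    _ ↔ _ := by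
        rw [not_subsingleton_image_iff_exists_lt]
        constructor
        · rintro ⟨x, ⟨⟨hx0, hxT⟩, hαx⟩, y, ⟨⟨hy0, hyT⟩, hαy⟩, hxy, hBxy⟩
          exact ⟨x, y, hx0, hxy, hyT, hαx, hαy, (hB_ne hx0 hxy hyT).1 hBxy⟩
        · rintro ⟨x, y, hx0, hxy, hyT, hαx, hαy, hI⟩
          exact ⟨x, ⟨⟨hx0, hxy.trans hyT⟩, hαx⟩, y, ⟨⟨hx0.trans hxy, hyT⟩, hαy⟩, hxy,
            (hB_ne hx0 hxy hyT).2 hI⟩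
end

section
/- Let T > 0 and let α, β : [0,T] → ℝ be continuous functions. Say that the planar cascade system is exactly controllable on [0,T] if for every initial state X⁰ = (X⁰_1, X⁰_2) ∈ ℝ² and every target state X^T = (X^T_1, X^T_2) ∈ ℝ² there exists a measurable function g : [0,T] → ℝ with ∫_0^T g(t)² dt < ∞ such that the functions X_1(t) = X⁰_1 + ∫_0^t α(s)g(s) ds and X_2(t) = X⁰_2 + ∫_0^t β(s)X_1(s) ds satisfy X_1(T) = X^T_1 and X_2(T) = X^T_2. Then the planar cascade system is exactly controllable on [0,T] if and only if there exist real numbers t_1, t_2 with 0 < t_1 < t_2 < T such that α(t_1) ≠ 0, α(t_2) ≠ 0, and ∫_{t_1}^{t_2} β(τ)dτ ≠ 0. -/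
/-!
Integrating by parts, the second component of the final state is
`X⁰₂ + X⁰₁ ∫₀ᵀ β + ∫₀ᵀ w α g` with the tail integral `w t = ∫ₜᵀ β`, so exact controllability means
that the moments `g ↦ (∫₀ᵀ α g, ∫₀ᵀ w α g)` of admissible controls fill `ℝ²`.

If the condition on `t₁, t₂` fails, `w` takes a single value `c` on `{α ≠ 0} ∩ (0, T)`, so every
moment vector lies on the line `y = c x`. If it holds, `α` and `w α` are linearly independent on
`[0, T]`. A nonzero functional `(x, y) ↦ p x + q y` vanishing on all moments of continuous controls
would then vanish on the moments of the control `p α + q w α` itself, i.e. `∫₀ᵀ (p α + q w α)² = 0`,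
forcing `p α + q w α = 0` on `[0, T]` and hence `p = q = 0`.
-/

open MeasureTheory Set intervalIntegral

open scoped Interval

theorem ContinuousOn.exists_continuous_eqOn_Icc {a b : ℝ} {f : ℝ → ℝ}
    (hf : ContinuousOn f (Icc a b)) (hab : a ≤ b) :
    ∃ g : ℝ → ℝ, Continuous g ∧ EqOn g f (Icc a b) :=
  ⟨IccExtend hab ((Icc a b).domRestrict f), continuous_IccExtend_iff.2 hf.domRestrict,
    fun _ hx => IccExtend_of_mem _ _ hx⟩

theorem ContinuousOn.eqOn_zero_of_integral_sq_eq_zero {a b : ℝ} {h : ℝ → ℝ} (hab : a < b)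
    (hh : ContinuousOn h (Icc a b)) (h0 : ∫ t in a..b, h t ^ 2 = 0) : EqOn h 0 (Icc a b) := by
  rw [integral_of_le hab.le, ← integral_Icc_eq_integral_Ioc,
    integral_eq_zero_iff_of_nonneg (fun t => sq_nonneg (h t)) (hh.pow 2).integrableOn_Icc] at h0
  intro t ht
  exact pow_eq_zero_iff two_ne_zero |>.1 <|
    Measure.eqOn_Icc_of_ae_eq volume hab.ne h0 (hh.pow 2) continuousOn_const ht

theorem ContinuousOn.eqOn_zero_of_forall_integral_mul_eq_zero {a b : ℝ} {h : ℝ → ℝ}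
    (hab : a < b) (hh : ContinuousOn h (Icc a b))
    (hg : ∀ g : ℝ → ℝ, Continuous g → ∫ t in a..b, h t * g t = 0) : EqOn h 0 (Icc a b) := by
  obtain ⟨h', hh', hh'h⟩ := hh.exists_continuous_eqOn_Icc hab.le
  refine hh.eqOn_zero_of_integral_sq_eq_zero hab ?_
  rw [← hg h' hh']
  refine integral_congr fun t ht => ?_
  rw [uIcc_of_le hab.le] at ht
  rw [sq, hh'h ht]

theorem exists_continuous_integral_mul_eq {ι : Type*} [Fintype ι] {a b : ℝ} {u : ι → ℝ → ℝ}
    (hab : a < b) (hu : ∀ i, ContinuousOn (u i) (Icc a b))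
    (hind : LinearIndependent ℝ fun i => (Icc a b).domRestrict (u i)) (z : ι → ℝ) :
    ∃ g : ℝ → ℝ, Continuous g ∧ ∀ i, ∫ t in a..b, u i t * g t = z i := by
  classical
  have hint (i : ι) {g : ℝ → ℝ} (hg : Continuous g) :
      IntervalIntegrable (fun t => u i t * g t) volume a b :=
    ((hu i).mul hg.continuousOn).intervalIntegrable_of_Icc hab.le
  let L : C(ℝ, ℝ) →ₗ[ℝ] ι → ℝ :=
    { toFun := fun g i => ∫ t in a..b, u i t * g t
      map_add' := fun g g' => funext fun i => by
        simp only [ContinuousMap.add_apply, mul_add, Pi.add_apply]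
        exact integral_add (hint i g.continuous) (hint i g'.continuous)
      map_smul' := fun c g => funext fun i => by
        simp only [ContinuousMap.smul_apply, smul_eq_mul, mul_left_comm _ c, Pi.smul_apply,
          RingHom.id_apply]
        exact integral_const_mul c _ }
  suffices LinearMap.range L = ⊤ by
    obtain ⟨g, hg⟩ := LinearMap.range_eq_top.1 this z
    exact ⟨g, g.continuous, congrFun hg⟩
  by_contra hL
  obtain ⟨f, hf, hfL⟩ := (LinearMap.range L).exists_le_ker_of_lt_top (lt_top_iff_ne_top.2 hL)
  set c : ι → ℝ := fun i => f fun j => if i = j then 1 else 0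
  have hzero : EqOn (fun t => ∑ i, c i * u i t) 0 (Icc a b) := by
    refine ContinuousOn.eqOn_zero_of_forall_integral_mul_eq_zero hab
      (continuousOn_finsetSum _ fun i _ => continuousOn_const.mul (hu i)) fun g hg => ?_
    have hfg := hfL (LinearMap.mem_range_self L ⟨g, hg⟩)
    rw [LinearMap.mem_ker, LinearMap.pi_apply_eq_sum_univ] at hfg
    simp only [Finset.sum_mul, mul_assoc]
    rw [integral_finsetSum fun i _ => (hint i hg).const_mul (c i)]
    simpa [intervalIntegral.integral_const_mul, mul_comm, L, c] using hfg
  have hc : ∀ i, c i = 0 := Fintype.linearIndependent_iff.1 hind c <| funext fun t => by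
    simpa using hzero t.2
  refine hf <| LinearMap.ext fun x => ?_
  rw [LinearMap.pi_apply_eq_sum_univ f x]
  exact Finset.sum_eq_zero fun i _ => (congrArg (x i • ·) (hc i)).trans (smul_zero _)

theorem IntervalIntegrable.ae_deriv_primitive_eq {a b : ℝ} {f : ℝ → ℝ}
    (hf : IntervalIntegrable f volume a b) :
    ∀ᵐ x, x ∈ Ι a b → deriv (fun x => ∫ t in a..x, f t) x = f x := by
  filter_upwards [hf.ae_hasDerivAt_integral] with x hx hxab
  exact (hx (uIoc_subset_uIcc hxab) a left_mem_uIcc).deriv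

theorem intervalIntegral.integral_interval_sub_right {a b c : ℝ} {f : ℝ → ℝ}
    (hab : IntervalIntegrable f volume a b) (hcb : IntervalIntegrable f volume c b) :
    (∫ x in a..b, f x) - ∫ x in c..b, f x = ∫ x in a..c, f x :=
  sub_eq_of_eq_add (integral_add_adjacent_intervals (hab.trans hcb.symm) hcb).symm

theorem intervalIntegral.integral_mul_primitive {a b : ℝ} {γ ψ : ℝ → ℝ}
    (hγ : IntervalIntegrable γ volume a b) (hψ : IntervalIntegrable ψ volume a b) :
    ∫ s in a..b, γ s * ∫ u in a..s, ψ u = ∫ u in a..b, (∫ s in u..b, γ s) * ψ u := by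
  set F : ℝ → ℝ := fun x => ∫ u in a..x, ψ u
  set G : ℝ → ℝ := fun x => ∫ s in a..x, γ s
  have hF := hψ.absolutelyContinuousOnInterval_intervalIntegral left_mem_uIcc
  have hG := hγ.absolutelyContinuousOnInterval_intervalIntegral left_mem_uIcc
  have htail : EqOn (fun u => (∫ s in u..b, γ s) * ψ u) (fun u => G b * ψ u - G u * ψ u)
      (uIcc a b) := fun u hu => by
    simp only [G, ← sub_mul, integral_interval_sub_left hγ (hγ.mono_set (uIcc_subset_uIcc_left hu))]
  calc ∫ s in a..b, γ s * F s
      = ∫ s in a..b, F s * deriv G s :=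
        integral_congr_ae <| hγ.ae_deriv_primitive_eq.mono fun s hs hsab => by
          rw [hs hsab, mul_comm]
    _ = F b * G b - F a * G a - ∫ u in a..b, deriv F u * G u :=
        hF.integral_mul_deriv_eq_deriv_mul hG
    _ = F b * G b - ∫ u in a..b, G u * ψ u := by
        rw [integral_congr_ae <| hψ.ae_deriv_primitive_eq.mono fun u hu huab => by
          rw [hu huab, mul_comm] ]
        simp only [F, integral_same, zero_mul, sub_zero]
    _ = ∫ u in a..b, (∫ s in u..b, γ s) * ψ u := by
        rw [integral_congr htail,
          integral_sub (hψ.const_mul _) (hψ.continuousOn_mul hG.continuousOn),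
          integral_const_mul, mul_comm (F b)]

theorem intervalIntegral.integral_mul_const_add_primitive {a b : ℝ} {γ ψ : ℝ → ℝ}
    (hγ : IntervalIntegrable γ volume a b) (hψ : IntervalIntegrable ψ volume a b) (x : ℝ) :
    ∫ s in a..b, γ s * (x + ∫ u in a..s, ψ u)
      = x * (∫ s in a..b, γ s) + ∫ u in a..b, (∫ s in u..b, γ s) * ψ u := by
  have hF : ContinuousOn (fun s => ∫ u in a..s, ψ u) (uIcc a b) :=
    (hψ.absolutelyContinuousOnInterval_intervalIntegral left_mem_uIcc).continuousOn
  simp only [mul_add]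
  rw [integral_add (hγ.mul_const x) (hγ.mul_continuousOn hF), integral_mul_const, mul_comm,
    integral_mul_primitive hγ hψ]

theorem intervalIntegral.integral_mul_mul_eq_const_mul {a b c : ℝ} {α v : ℝ → ℝ} (hab : a ≤ b)
    (hv : ∀ t ∈ Ioo a b, α t ≠ 0 → v t = c) (g : ℝ → ℝ) :
    ∫ t in a..b, v t * (α t * g t) = c * ∫ t in a..b, α t * g t := by
  rw [← integral_const_mul, integral_of_le hab, integral_of_le hab, integral_Ioc_eq_integral_Ioo,
    integral_Ioc_eq_integral_Ioo]
  refine setIntegral_congr_fun measurableSet_Ioo fun t ht => ?_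
  by_cases hαt : α t = 0
  · simp [hαt]
  · rw [hv t ht hαt]

theorem Set.exists_forall_eq_of_forall_lt_imp_eq {X Y : Type*} [LinearOrder X] [Nonempty Y]
    {S : Set X} {f : X → Y} (h : ∀ x ∈ S, ∀ y ∈ S, x < y → f x = f y) :
    ∃ c, ∀ x ∈ S, f x = c := by
  rcases S.eq_empty_or_nonempty with rfl | ⟨x₀, hx₀⟩
  · exact ⟨Classical.arbitrary Y, fun x hx => hx.elim⟩
  refine ⟨f x₀, fun x hx => ?_⟩
  rcases lt_trichotomy x x₀ with hlt | rfl | hgt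
  exacts [h x hx x₀ hx₀ hlt, rfl, (h x₀ hx₀ x hx hgt).symm]

theorem exists_forall_tail_integral_eq {a b : ℝ} {α β : ℝ → ℝ}
    (hβ : IntervalIntegrable β volume a b)
    (h : ∀ t₁ t₂, a < t₁ → t₁ < t₂ → t₂ < b → α t₁ ≠ 0 → α t₂ ≠ 0 → ∫ τ in t₁..t₂, β τ = 0) :
    ∃ c, ∀ t ∈ Ioo a b, α t ≠ 0 → ∫ s in t..b, β s = c := by
  have htail {t : ℝ} (ht : t ∈ Ioo a b) : IntervalIntegrable β volume t b :=
    hβ.mono_set <| uIcc_subset_uIcc (Icc_subset_uIcc (Ioo_subset_Icc_self ht)) right_mem_uIcc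
  obtain ⟨c, hc⟩ := Set.exists_forall_eq_of_forall_lt_imp_eq (S := {t ∈ Ioo a b | α t ≠ 0})
    (f := fun t => ∫ s in t..b, β s) fun t₁ h₁ t₂ h₂ h₁₂ => sub_eq_zero.1 <| by
      rw [integral_interval_sub_right (htail h₁.1) (htail h₂.1)]
      exact h t₁ t₂ h₁.1.1 h₁₂ h₂.1.2 h₁.2 h₂.2
  exact ⟨c, fun t ht hαt => hc t ⟨ht, hαt⟩⟩

theorem linearIndependent_domRestrict_pair_mul {X K : Type*} [Field K] {S : Set X}
    {α w : X → K} {t₁ t₂ : X} (ht₁ : t₁ ∈ S) (ht₂ : t₂ ∈ S) (hα₁ : α t₁ ≠ 0) (hα₂ : α t₂ ≠ 0)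
    (hw : w t₁ ≠ w t₂) :
    LinearIndependent K ![S.domRestrict α, S.domRestrict fun t => w t * α t] := by
  refine LinearIndependent.pair_iff.2 fun p q hpq => ?_
  have hzero : ∀ t ∈ S, (p + q * w t) * α t = 0 := fun t ht => by
    simpa [add_mul, mul_assoc] using congrFun hpq ⟨t, ht⟩
  have h₁ := (mul_eq_zero.1 (hzero t₁ ht₁)).resolve_right hα₁
  have h₂ := (mul_eq_zero.1 (hzero t₂ ht₂)).resolve_right hα₂
  have hq : q = 0 := by
    have : q * (w t₁ - w t₂) = 0 := by linear_combination h₁ - h₂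
    exact (mul_eq_zero.1 this).resolve_right (sub_ne_zero.2 hw)
  exact ⟨by simpa [hq] using h₁, hq⟩

theorem exists_continuous_integral_mul_eq_and_tail_integral {a b t₁ t₂ : ℝ} {α β : ℝ → ℝ}
    (hα : ContinuousOn α (Icc a b)) (hβ : ContinuousOn β (Icc a b)) (ht₁ : a ≤ t₁)
    (ht₁₂ : t₁ < t₂) (ht₂ : t₂ ≤ b) (hα₁ : α t₁ ≠ 0) (hα₂ : α t₂ ≠ 0)
    (hβ₁₂ : ∫ τ in t₁..t₂, β τ ≠ 0) (z₁ z₂ : ℝ) :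
    ∃ g : ℝ → ℝ, Continuous g ∧ ∫ t in a..b, α t * g t = z₁ ∧
      ∫ t in a..b, (∫ s in t..b, β s) * (α t * g t) = z₂ := by
  have hab : a < b := by linarith
  set w : ℝ → ℝ := fun t => ∫ s in t..b, β s
  have hw : ContinuousOn w (Icc a b) := by
    simpa [uIcc_of_le hab.le] using continuousOn_primitive_interval_left
      (hβ.integrableOn_Icc.mono_set (uIcc_of_le hab.le).subset)
  have hβi {t : ℝ} (ht : t ∈ Icc a b) : IntervalIntegrable β volume t b :=
    (hβ.mono (Icc_subset_Icc_left ht.1)).intervalIntegrable_of_Icc ht.2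
  have hind := linearIndependent_domRestrict_pair_mul (S := Icc a b) (w := w)
    ⟨ht₁, by linarith⟩ ⟨by linarith, ht₂⟩ hα₁ hα₂ <| sub_ne_zero.1 <| by
      rwa [integral_interval_sub_right (hβi ⟨ht₁, by linarith⟩) (hβi ⟨by linarith, ht₂⟩)]
  obtain ⟨g, hg, hmom⟩ := exists_continuous_integral_mul_eq (u := ![α, fun t => w t * α t]) hab
    (Fin.forall_fin_two.2 ⟨hα, hw.mul hα⟩)
    (by rwa [show (fun i => (Icc a b).domRestrict (![α, fun t => w t * α t] i)) = ![_, _] from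
      funext <| Fin.forall_fin_two.2 ⟨rfl, rfl⟩]) ![z₁, z₂]
  exact ⟨g, hg, by simpa using hmom 0, by simpa [mul_assoc] using hmom 1⟩

/-- Controllability of the planar cascade system `X₁' = α g`, `X₂' = β X₁` on `[0, T]` with
scalar control `g ∈ L²(0,T)` is equivalent to the existence of times `0 < t₁ < t₂ < T` with
`α(t₁) ≠ 0`, `α(t₂) ≠ 0` and `∫_{t₁}^{t₂} β ≠ 0`. -/
theorem cascade_exact_controllability_iff (T : ℝ) (hT : 0 < T) (α β : ℝ → ℝ)
    (hα : ContinuousOn α (Set.Icc 0 T)) (hβ : ContinuousOn β (Set.Icc 0 T)) :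
    (∀ X0 XT : ℝ × ℝ, ∃ g : ℝ → ℝ, Measurable g ∧
        IntervalIntegrable (fun t => (g t) ^ 2) volume 0 T ∧
        IntervalIntegrable (fun s => α s * g s) volume 0 T ∧
        (X0.1 + ∫ s in (0:ℝ)..T, α s * g s) = XT.1 ∧
        (X0.2 + ∫ s in (0:ℝ)..T,
            β s * (X0.1 + ∫ u in (0:ℝ)..s, α u * g u)) = XT.2)
    ↔ (∃ t₁ t₂ : ℝ, 0 < t₁ ∧ t₁ < t₂ ∧ t₂ < T ∧
        α t₁ ≠ 0 ∧ α t₂ ≠ 0 ∧ (∫ τ in t₁..t₂, β τ) ≠ 0) := by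
  have hβi : IntervalIntegrable β volume 0 T := hβ.intervalIntegrable_of_Icc hT.le
  constructor
  · contrapose!
    intro hβ0
    obtain ⟨c, hc⟩ := exists_forall_tail_integral_eq hβi hβ0
    refine ⟨(0, 0), (1, c + 1), fun g _ _ hαg h₁ => ?_⟩
    rw [integral_mul_const_add_primitive hβi hαg, integral_mul_mul_eq_const_mul hT.le hc]
    simp only [zero_add] at h₁ ⊢
    rw [h₁]
    linarith
  · rintro ⟨t₁, t₂, ht₁, ht₁₂, ht₂, hα₁, hα₂, hβ₁₂⟩ X0 XT
    obtain ⟨g, hg, h₁, h₂⟩ := exists_continuous_integral_mul_eq_and_tail_integral hα hβ ht₁.le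
      ht₁₂ ht₂.le hα₁ hα₂ hβ₁₂ (XT.1 - X0.1) (XT.2 - X0.2 - X0.1 * ∫ s in (0:ℝ)..T, β s)
    have hαg : IntervalIntegrable (fun s => α s * g s) volume 0 T :=
      (hα.mul hg.continuousOn).intervalIntegrable_of_Icc hT.le
    refine ⟨g, hg.measurable, (hg.pow 2).intervalIntegrable _ _, hαg, ?_, ?_⟩
    · rw [h₁]
      ring
    · rw [integral_mul_const_add_primitive hβi hαg, h₂]
      ring
end
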